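/- A project-join tree yields a tree decomposition: if (T, r, γ, π) is a project-join tree of width w of a CNF formula φ, then defining χ(n) = vars(n) for leaves n and χ(n) = vars(n) ∪ π(n) for internal nodes n gives a tree decomposition (T, χ) of the Gaifman graph of φ of treewidth w − 1. -/

import Mathlib

/-!
Leaves carry the clauses and the bag of a leaf is the variable set of its clause, which gives
vertex and edge coverage; the width bounds hold because `size` of a node is the size of its bag.

For running intersection fix a variable `x`. The labels are pairwise disjoint (the sum of their
sizes is the size of their union), so `x` is projected at exactly one node `q`; each clause sits
at exactly one leaf, so the `descend` condition puts every clause mentioning `x` below `q`. A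
node `n ≠ q` whose bag contains `x` has `x ∈ vars(n)`, so some clause below `n` mentions `x` and
`n`, `q` are comparable. If `n` were above `q`, then `x ∈ vars(n)` would be passed down the path
towards the `x`-clauses, all below `q`, and reach `q`, where `x` is projected away. So `n` lies
below `q`, and as no node strictly below `q` projects `x`, it stays in `vars` from `n` up to `q`.
-/

variable {V : Type*} [DecidableEq V]

structure Clause (V : Type*) where
  pos : Finset V
  neg : Finset V

def Clause.vars [DecidableEq V] (c : Clause V) : Finset V := c.pos ∪ c.neg

noncomputable def Clause.ind [DecidableEq V] (c : Clause V) (τ : Finset V) : ℝ :=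
  if (∃ x ∈ c.pos, x ∈ τ) ∨ (∃ x ∈ c.neg, x ∉ τ) then 1 else 0

inductive PJT (V : Type*) where
  | leaf (c : Clause V)
  | node (lbl : Finset V) (children : List (PJT V))

namespace PJT

def clauses : PJT V → Multiset (Clause V)
  | .leaf c => {c}
  | .node _ cs => (cs.attach.map (fun o => clauses o.1)).sum
decreasing_by
  have := List.sizeOf_lt_of_mem o.2
  simp only [PJT.node.sizeOf_spec]
  omega

def labels : PJT V → Multiset (Finset V)
  | .leaf _ => 0
  | .node lbl cs => lbl ::ₘ (cs.attach.map (fun o => labels o.1)).sum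
decreasing_by
  have := List.sizeOf_lt_of_mem o.2
  simp only [PJT.node.sizeOf_spec]
  omega

def P : PJT V → Finset V
  | .leaf _ => ∅
  | .node lbl cs => lbl ∪ (cs.attach.map (fun o => P o.1)).foldr (· ∪ ·) ∅
decreasing_by
  have := List.sizeOf_lt_of_mem o.2
  simp only [PJT.node.sizeOf_spec]
  omega

def varsOf : PJT V → Finset V
  | .leaf c => c.vars
  | .node lbl cs => (cs.attach.map (fun o => varsOf o.1)).foldr (· ∪ ·) ∅ \ lbl
decreasing_by
  have := List.sizeOf_lt_of_mem o.2
  simp only [PJT.node.sizeOf_spec]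
  omega

def size : PJT V → ℕ
  | .leaf c => c.vars.card
  | .node lbl cs => (varsOf (.node lbl cs) ∪ lbl).card

def width : PJT V → ℕ
  | .leaf c => c.vars.card
  | .node lbl cs =>
      max (size (.node lbl cs)) ((cs.attach.map (fun o => width o.1)).foldr max 0)
decreasing_by
  have := List.sizeOf_lt_of_mem o.2
  simp only [PJT.node.sizeOf_spec]
  omega

def wProd (W : V → Bool → ℝ) (S : Finset V) (τ : Finset V) : ℝ :=
  ∏ x ∈ S, W x (decide (x ∈ τ))

noncomputable def val (W : V → Bool → ℝ) : PJT V → Finset V → ℝ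
  | .leaf c => c.ind
  | .node lbl cs => fun τ =>
      ∑ σ ∈ lbl.powerset,
        (cs.attach.map (fun o => val W o.1 ((τ ∪ σ) ∩ varsOf o.1))).prod
          * wProd W lbl (τ ∪ σ)
decreasing_by
  have := List.sizeOf_lt_of_mem o.2
  simp only [PJT.node.sizeOf_spec]
  omega

inductive Subtree : PJT V → PJT V → Prop
  | refl (t : PJT V) : Subtree t t
  | child {s c : PJT V} {lbl : Finset V} {cs : List (PJT V)} :
      c ∈ cs → Subtree s c → Subtree s (.node lbl cs)

end PJT

def Formula.vars (φ : Finset (Clause V)) : Finset V := φ.sup Clause.vars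

def clausesVars (M : Multiset (Clause V)) : Finset V := (M.map Clause.vars).sup

structure IsPJT (φ : Finset (Clause V)) (t : PJT V) : Prop where
  clauses_eq : t.clauses = φ.val
  cover : t.P = Formula.vars φ
  disjoint_labels : (t.labels.map Finset.card).sum = (Formula.vars φ).card
  descend : ∀ lbl cs, PJT.Subtree (.node lbl cs) t →
    ∀ c ∈ φ, ∀ x ∈ lbl, x ∈ c.vars → c ∈ PJT.clauses (.node lbl cs)


/-- The subtree of a project-join tree at a position (a path of child indices). -/
def PJT.subAt {V : Type*} [DecidableEq V] : PJT V → List ℕ → Option (PJT V)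
  | t, [] => some t
  | .leaf _, _ :: _ => none
  | .node _ cs, i :: p =>
    match h : cs[i]? with
    | some c => PJT.subAt c p
    | none => none
termination_by t _ => sizeOf t
decreasing_by
  obtain ⟨hi, rfl⟩ := List.getElem?_eq_some_iff.mp h
  have := List.sizeOf_lt_of_mem (List.getElem_mem hi)
  simp only [PJT.node.sizeOf_spec]
  omega

/-- The bag of a node: `vars(n)` for a leaf, `vars(n) ∪ π(n)` for an internal node. -/
def PJT.bag {V : Type*} [DecidableEq V] : PJT V → Finset V
  | .leaf c => c.vars
  | .node lbl cs => PJT.varsOf (.node lbl cs) ∪ lbl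

/-- The bag at a position of the tree, if the position is valid. -/
def PJT.bagAt {V : Type*} [DecidableEq V] (t : PJT V) (p : List ℕ) :
    Option (Finset V) :=
  (t.subAt p).map PJT.bag
theorem List.mem_foldr_union_map {ι α : Type*} [DecidableEq α] {l : List ι}
    {f : ι → Finset α} {x : α} : x ∈ (l.map f).foldr (· ∪ ·) ∅ ↔ ∃ c ∈ l, x ∈ f c := by
  induction l <;> simp_all

theorem List.le_sum_map_of_getElem? {α M : Type*} [AddMonoid M] [PartialOrder M]
    [CanonicallyOrderedAdd M] {l : List α} {g : α → M} {i : ℕ} {a : α} (ha : l[i]? = some a) :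
    g a ≤ (l.map g).sum :=
  List.le_sum_of_mem (List.mem_map_of_mem (List.mem_of_getElem? ha))

theorem List.add_le_sum_map_of_ne {α M : Type*} [AddCommMonoid M] [PartialOrder M]
    [CanonicallyOrderedAdd M] {l : List α} {g : α → M} {i j : ℕ} {a b : α} (hij : i ≠ j)
    (ha : l[i]? = some a) (hb : l[j]? = some b) : g a + g b ≤ (l.map g).sum := by
  obtain ⟨hi, rfl⟩ := List.getElem?_eq_some_iff.1 ha
  rw [← (List.getElem_cons_eraseIdx_perm hi).map g |>.sum_eq, List.map_cons, List.sum_cons]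
  exact add_le_add_right (List.le_sum_of_mem (List.mem_map_of_mem
    (List.mem_eraseIdx_iff_getElem?.2 ⟨j, hij.symm, hb⟩))) _

theorem Multiset.mem_sum_map_list {α β : Type*} {l : List β} {g : β → Multiset α} {a : α} :
    a ∈ (l.map g).sum ↔ ∃ c ∈ l, a ∈ g c := by
  induction l <;> simp_all

theorem Multiset.mem_sup_iff_exists {α : Type*} [DecidableEq α] {M : Multiset (Finset α)}
    {x : α} : x ∈ M.sup ↔ ∃ A ∈ M, x ∈ A := by
  induction M using Multiset.induction_on <;> simp_all

theorem Multiset.countP_mem_le_one_of_sum_card_eq {α : Type*} [DecidableEq α]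
    {M : Multiset (Finset α)} (h : (M.map Finset.card).sum = M.sup.card) (x : α) :
    M.countP (x ∈ ·) ≤ 1 := by
  -- the sizes add up to the size of the union only if the join of `M` has no repeated element
  have hN : (M.bind Finset.val).toFinset = M.sup := by
    ext y
    simp [Multiset.mem_sup_iff_exists]
  have hnd : (M.bind Finset.val).Nodup :=
    Multiset.toFinset_card_eq_card_iff_nodup.1 (by rw [hN, Multiset.card_bind, ← h]; rfl)
  calc M.countP (x ∈ ·) = (M.bind Finset.val).count x := by
        clear h hN hnd
        rw [Multiset.count_bind]
        induction M using Multiset.induction_on <;>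
          simp_all [Multiset.countP_cons, Multiset.count_eq_of_nodup, Finset.nodup, add_comm]
    _ ≤ 1 := Multiset.nodup_iff_count_le_one.1 hnd x

namespace PJT

@[induction_eliminator]
theorem induction_mem {V : Type*} {motive : PJT V → Prop} (leaf : ∀ c, motive (.leaf c))
    (node : ∀ lbl cs, (∀ c ∈ cs, motive c) → motive (.node lbl cs)) : ∀ t, motive t
  | .leaf c => leaf c
  | .node lbl cs => node lbl cs fun c _ => induction_mem leaf node c

def children {V : Type*} : PJT V → List (PJT V)
  | .leaf _ => []
  | .node _ cs => cs

theorem clauses_node {V : Type*} (lbl : Finset V) (cs : List (PJT V)) :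
    (node lbl cs).clauses = (cs.map clauses).sum := by
  rw [clauses]; simp

theorem labels_node {V : Type*} (lbl : Finset V) (cs : List (PJT V)) :
    (node lbl cs).labels = lbl ::ₘ (cs.map labels).sum := by
  rw [labels]; simp

theorem P_node (lbl : Finset V) (cs : List (PJT V)) :
    (node lbl cs).P = lbl ∪ (cs.map P).foldr (· ∪ ·) ∅ := by
  rw [P]; simp

theorem width_node (lbl : Finset V) (cs : List (PJT V)) :
    (node lbl cs).width = max (node lbl cs).size ((cs.map width).foldr max 0) := by
  rw [width]; simp

theorem mem_varsOf_node {lbl : Finset V} {cs : List (PJT V)} {x : V} :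
    x ∈ (node lbl cs).varsOf ↔ (∃ c ∈ cs, x ∈ c.varsOf) ∧ x ∉ lbl := by
  rw [varsOf]; simp [List.mem_foldr_union_map]

theorem subAt_nil (t : PJT V) : t.subAt [] = some t := by
  rw [subAt]

theorem subAt_cons (t : PJT V) (i : ℕ) (p : List ℕ) :
    t.subAt (i :: p) = t.children[i]?.bind (subAt · p) := by
  cases t with
  | leaf c => rw [subAt]; rfl
  | node lbl cs =>
    rw [subAt]
    split <;> simp_all [children]

theorem subAt_cons_eq_some {t s : PJT V} {i : ℕ} {p : List ℕ} :
    t.subAt (i :: p) = some s ↔ ∃ c, t.children[i]? = some c ∧ c.subAt p = some s := by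
  rw [subAt_cons, Option.bind_eq_some_iff]

theorem subAt_append (t : PJT V) (p q : List ℕ) :
    t.subAt (p ++ q) = (t.subAt p).bind (subAt · q) := by
  induction p generalizing t with
  | nil => simp [subAt_nil]
  | cons i p ih =>
    simp only [List.cons_append, subAt_cons, ih]
    cases t.children[i]? <;> rfl

theorem subtree_of_subAt {t s : PJT V} {p : List ℕ} (h : t.subAt p = some s) :
    Subtree s t := by
  induction p generalizing t with
  | nil => rw [subAt_nil, Option.some_inj] at h; exact h ▸ .refl t
  | cons i p ih =>
    obtain ⟨c, hc, hs⟩ := subAt_cons_eq_some.1 h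
    cases t with
    | leaf _ => simp [children] at hc
    | node lbl cs => exact .child (List.mem_of_getElem? hc) (ih hs)

def IsSubtreeSum {V β : Type*} (own g : PJT V → Multiset β) : Prop :=
  ∀ s, g s = own s + (s.children.map g).sum

section IsSubtreeSum

variable {β : Type*} {own g : PJT V → Multiset β}

theorem le_of_subAt (hg : IsSubtreeSum own g) {t s : PJT V}
    {p : List ℕ} (h : t.subAt p = some s) : g s ≤ g t := by
  induction p generalizing t with
  | nil => rw [subAt_nil, Option.some_inj] at h; exact h ▸ le_rfl
  | cons i p ih =>
    obtain ⟨c, hc, hs⟩ := subAt_cons_eq_some.1 h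
    calc g s ≤ g c := ih hs
      _ ≤ (t.children.map g).sum := List.le_sum_map_of_getElem? hc
      _ ≤ g t := (hg t).symm ▸ le_add_self

theorem le_sum_of_subAt_cons (hg : IsSubtreeSum own g)
    {t s : PJT V} {i : ℕ} {p : List ℕ} (h : t.subAt (i :: p) = some s) :
    g s ≤ (t.children.map g).sum := by
  obtain ⟨c, hc, hs⟩ := subAt_cons_eq_some.1 h
  exact (le_of_subAt hg hs).trans (List.le_sum_map_of_getElem? hc)

theorem own_add_own_le_of_subAt (hg : IsSubtreeSum own g)
    {t s₁ s₂ : PJT V} {p₁ p₂ : List ℕ} (h₁ : t.subAt p₁ = some s₁)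
    (h₂ : t.subAt p₂ = some s₂) (hne : p₁ ≠ p₂) : own s₁ + own s₂ ≤ g t := by
  have hown : ∀ s, own s ≤ g s := fun s => (hg s).symm ▸ le_self_add
  induction p₁ generalizing t p₂ with
  | nil =>
    obtain ⟨j, p₂, rfl⟩ := List.exists_cons_of_ne_nil hne.symm
    rw [subAt_nil, Option.some_inj] at h₁
    subst h₁
    rw [hg t]
    exact add_le_add_right ((hown s₂).trans (le_sum_of_subAt_cons hg h₂)) _
  | cons i p₁ ih =>
    cases p₂ with
    | nil =>
      rw [subAt_nil, Option.some_inj] at h₂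
      subst h₂
      rw [hg t, add_comm]
      exact add_le_add_right ((hown s₁).trans (le_sum_of_subAt_cons hg h₁)) _
    | cons j p₂ =>
      obtain ⟨c₁, hc₁, hs₁⟩ := subAt_cons_eq_some.1 h₁
      obtain ⟨c₂, hc₂, hs₂⟩ := subAt_cons_eq_some.1 h₂
      rw [hg t]
      refine le_add_left ?_
      by_cases hij : i = j
      · subst hij
        obtain rfl : c₁ = c₂ := Option.some_inj.1 (hc₁.symm.trans hc₂)
        exact (ih hs₁ hs₂ fun h => hne (h ▸ rfl)).trans (List.le_sum_map_of_getElem? hc₁)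
      · exact (add_le_add ((hown s₁).trans (le_of_subAt hg hs₁))
          ((hown s₂).trans (le_of_subAt hg hs₂))).trans (List.add_le_sum_map_of_ne hij hc₁ hc₂)

theorem eq_of_subAt_of_countP_le_one (hg : IsSubtreeSum own g)
    {q : β → Prop} [DecidablePred q] {t s₁ s₂ : PJT V} {p₁ p₂ : List ℕ} {a₁ a₂ : β}
    (hq : (g t).countP q ≤ 1) (h₁ : t.subAt p₁ = some s₁) (h₂ : t.subAt p₂ = some s₂)
    (ha₁ : a₁ ∈ own s₁) (hqa₁ : q a₁) (ha₂ : a₂ ∈ own s₂) (hqa₂ : q a₂) : p₁ = p₂ := by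
  by_contra hne
  have hle := Multiset.countP_le_of_le q (own_add_own_le_of_subAt hg h₁ h₂ hne)
  rw [Multiset.countP_add] at hle
  have := Multiset.countP_pos.2 ⟨a₁, ha₁, hqa₁⟩
  have := Multiset.countP_pos.2 ⟨a₂, ha₂, hqa₂⟩
  omega

theorem mem_of_subAt_of_mem_own (hg : IsSubtreeSum own g)
    {t s : PJT V} {p : List ℕ} {a : β} (h : t.subAt p = some s) (ha : a ∈ own s) : a ∈ g t :=
  Multiset.mem_of_le (le_of_subAt hg h) ((hg s).symm ▸ Multiset.mem_add.2 (Or.inl ha))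

theorem exists_subAt_of_mem (hg : IsSubtreeSum own g) {a : β}
    {t : PJT V} (ha : a ∈ g t) : ∃ p s, t.subAt p = some s ∧ a ∈ own s := by
  induction t with
  | leaf c =>
    rw [hg] at ha
    exact ⟨[], _, subAt_nil _, by simpa [children] using ha⟩
  | node lbl cs ih =>
    rw [hg] at ha
    rcases Multiset.mem_add.1 ha with ha | ha
    · exact ⟨[], _, subAt_nil _, ha⟩
    · obtain ⟨c, hc, hac⟩ := Multiset.mem_sum_map_list.1 ha
      obtain ⟨p, s, hs, has⟩ := ih c hc hac
      obtain ⟨i, hi⟩ := List.mem_iff_getElem?.1 hc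
      exact ⟨i :: p, s, subAt_cons_eq_some.2 ⟨c, hi, hs⟩, has⟩

end IsSubtreeSum

def ownClauses {V : Type*} : PJT V → Multiset (Clause V)
  | .leaf c => {c}
  | .node _ _ => 0

def ownLabels {V : Type*} : PJT V → Multiset (Finset V)
  | .leaf _ => 0
  | .node lbl _ => {lbl}

theorem isSubtreeSum_clauses {V : Type*} : IsSubtreeSum ownClauses (clauses (V := V)) := by
  intro s
  cases s with
  | leaf c => rw [clauses]; rfl
  | node lbl cs => simp [clauses_node, ownClauses, children]

theorem isSubtreeSum_labels {V : Type*} : IsSubtreeSum ownLabels (labels (V := V)) := by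
  intro s
  cases s with
  | leaf c => rw [labels]; rfl
  | node lbl cs => simp [labels_node, ownLabels, children]

theorem mem_ownClauses {V : Type*} {s : PJT V} {c : Clause V} :
    c ∈ s.ownClauses ↔ s = leaf c := by
  cases s <;> simp [ownClauses, eq_comm]

theorem exists_subAt_leaf_of_mem_clauses {t : PJT V} {c : Clause V} (hc : c ∈ t.clauses) :
    ∃ p, t.subAt p = some (leaf c) := by
  obtain ⟨p, s, hs, hcs⟩ := exists_subAt_of_mem isSubtreeSum_clauses hc
  exact ⟨p, mem_ownClauses.1 hcs ▸ hs⟩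

theorem eq_of_subAt_leaf {t : PJT V} {p₁ p₂ : List ℕ} {c : Clause V} (hnd : t.clauses.Nodup)
    (h₁ : t.subAt p₁ = some (leaf c)) (h₂ : t.subAt p₂ = some (leaf c)) : p₁ = p₂ := by
  classical
  exact eq_of_subAt_of_countP_le_one isSubtreeSum_clauses
    (Multiset.nodup_iff_count_le_one.1 hnd c) h₁ h₂ (mem_ownClauses.2 rfl) rfl
    (mem_ownClauses.2 rfl) rfl

theorem mem_P_iff {s : PJT V} {x : V} : x ∈ s.P ↔ ∃ A ∈ s.labels, x ∈ A := by
  induction s with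
  | leaf c => simp [P, labels]
  | node lbl cs ih =>
    simp only [P_node, labels_node, Finset.mem_union, List.mem_foldr_union_map, Multiset.mem_cons,
      Multiset.mem_sum_map_list]
    constructor
    · rintro (hx | ⟨c, hc, hx⟩)
      · exact ⟨lbl, Or.inl rfl, hx⟩
      · obtain ⟨A, hA, hxA⟩ := (ih c hc).1 hx
        exact ⟨A, Or.inr ⟨c, hc, hA⟩, hxA⟩
    · rintro ⟨A, rfl | ⟨c, hc, hA⟩, hxA⟩
      · exact Or.inl hxA
      · exact Or.inr ⟨c, hc, (ih c hc).2 ⟨A, hA, hxA⟩⟩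

theorem P_eq_sup (s : PJT V) : s.P = s.labels.sup := by
  ext x
  rw [mem_P_iff, Multiset.mem_sup_iff_exists]

theorem mem_bag_iff {s : PJT V} {x : V} :
    x ∈ s.bag ↔ x ∈ s.varsOf ∨ ∃ A ∈ s.ownLabels, x ∈ A := by
  cases s <;> simp [bag, ownLabels, varsOf]
  tauto

theorem notMem_varsOf_of_mem_ownLabels {s : PJT V} {A : Finset V} {x : V}
    (hA : A ∈ s.ownLabels) (hx : x ∈ A) : x ∉ s.varsOf := by
  cases s with
  | leaf c => simp [ownLabels] at hA
  | node lbl cs =>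
    rw [ownLabels, Multiset.mem_singleton] at hA
    exact fun h => (mem_varsOf_node.1 h).2 (hA ▸ hx)

theorem exists_subAt_leaf_of_mem_varsOf {s : PJT V} {x : V} (hx : x ∈ s.varsOf) :
    ∃ ℓ c, s.subAt ℓ = some (leaf c) ∧ x ∈ c.vars := by
  induction s with
  | leaf c => exact ⟨[], c, subAt_nil _, by rwa [varsOf] at hx⟩
  | node lbl cs ih =>
    obtain ⟨⟨c, hc, hxc⟩, -⟩ := mem_varsOf_node.1 hx
    obtain ⟨ℓ, d, hℓ, hxd⟩ := ih c hc hxc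
    obtain ⟨i, hi⟩ := List.mem_iff_getElem?.1 hc
    exact ⟨i :: ℓ, d, subAt_cons_eq_some.2 ⟨c, hi, hℓ⟩, hxd⟩

theorem mem_varsOf_of_subAt {a s : PJT V} {d : List ℕ} {x : V} (h : a.subAt d = some s)
    (hx : x ∈ s.varsOf) (hlab : ∀ A ∈ a.labels, x ∉ A) : x ∈ a.varsOf := by
  induction d generalizing a with
  | nil => rw [subAt_nil, Option.some_inj] at h; exact h ▸ hx
  | cons i d ih =>
    obtain ⟨c, hc, hs⟩ := subAt_cons_eq_some.1 h
    cases a with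
    | leaf _ => simp [children] at hc
    | node lbl cs =>
      rw [labels_node] at hlab
      refine mem_varsOf_node.2 ⟨⟨c, List.mem_of_getElem? hc, ih hs fun A hA => ?_⟩,
        hlab lbl (Multiset.mem_cons_self _ _)⟩
      exact hlab A (Multiset.mem_cons_of_mem
        (Multiset.mem_sum_map_list.2 ⟨c, List.mem_of_getElem? hc, hA⟩))

theorem mem_varsOf_subAt_of_forall_prefix {s s' : PJT V} {d : List ℕ} {x : V}
    (hx : x ∈ s.varsOf) (h : s.subAt d = some s')
    (hd : ∀ ℓ c, s.subAt ℓ = some (leaf c) → x ∈ c.vars → d <+: ℓ) : x ∈ s'.varsOf := by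
  induction d generalizing s with
  | nil => rw [subAt_nil, Option.some_inj] at h; exact h ▸ hx
  | cons j d ih =>
    obtain ⟨c, hc, hs⟩ := subAt_cons_eq_some.1 h
    cases s with
    | leaf _ => simp [children] at hc
    | node lbl cs =>
      obtain ⟨⟨c', hc', hxc'⟩, -⟩ := mem_varsOf_node.1 hx
      obtain ⟨i, hi⟩ := List.mem_iff_getElem?.1 hc'
      obtain ⟨ℓ, e, hℓ, hxe⟩ := exists_subAt_leaf_of_mem_varsOf hxc'
      obtain ⟨rfl, -⟩ := List.cons_prefix_cons.1 (hd _ _ (subAt_cons_eq_some.2 ⟨c', hi, hℓ⟩) hxe)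
      obtain rfl : c' = c := Option.some_inj.1 (hi.symm.trans hc)
      exact ih hxc' hs fun ℓ e hℓ hxe =>
        (List.cons_prefix_cons.1 (hd _ _ (subAt_cons_eq_some.2 ⟨c', hi, hℓ⟩) hxe)).2

theorem bagAt_of_subAt {t s : PJT V} {p : List ℕ} (h : t.subAt p = some s) :
    t.bagAt p = some s.bag := by
  simp [bagAt, h]

theorem size_eq_card_bag (s : PJT V) : s.size = s.bag.card := by
  cases s <;> rfl

theorem card_bag_le_width (s : PJT V) : s.bag.card ≤ s.width := by
  cases s with
  | leaf c => rw [width]; rfl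
  | node lbl cs => rw [width_node, ← size_eq_card_bag]; exact le_max_left _ _

theorem width_le_of_mem_children {t c : PJT V} (hc : c ∈ t.children) : c.width ≤ t.width := by
  cases t with
  | leaf _ => simp [children] at hc
  | node lbl cs =>
    rw [width_node]
    exact le_max_of_le_right (List.le_max_of_le' 0 (List.mem_map_of_mem hc) le_rfl)

theorem card_bag_le_width_of_subAt {t s : PJT V} {p : List ℕ} (h : t.subAt p = some s) :
    s.bag.card ≤ t.width := by
  induction p generalizing t with
  | nil => rw [subAt_nil, Option.some_inj] at h; exact h ▸ card_bag_le_width t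
  | cons i p ih =>
    obtain ⟨c, hc, hs⟩ := subAt_cons_eq_some.1 h
    exact (ih hs).trans (width_le_of_mem_children (List.mem_of_getElem? hc))

theorem exists_subAt_card_bag_eq_width (t : PJT V) :
    ∃ p s, t.subAt p = some s ∧ s.bag.card = t.width := by
  induction t with
  | leaf c => exact ⟨[], _, subAt_nil _, by rw [width]; rfl⟩
  | node lbl cs ih =>
    rw [width_node]
    by_cases hle : (cs.map width).foldr max 0 ≤ (node lbl cs).size
    · exact ⟨[], _, subAt_nil _, by rw [max_eq_left hle, size_eq_card_bag]⟩
    · have hne : cs.map width ≠ [] := by rintro h; simp [h] at hle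
      have hmem : (cs.map width).foldr max 0 ∈ cs.map width :=
        List.maximum_mem (List.foldr_max_of_ne_nil hne).symm
      obtain ⟨c, hc, hwc⟩ := List.mem_map.1 hmem
      obtain ⟨p, s, hs, hcard⟩ := ih c hc
      obtain ⟨i, hi⟩ := List.mem_iff_getElem?.1 hc
      exact ⟨i :: p, s, subAt_cons_eq_some.2 ⟨c, hi, hs⟩,
        by rw [max_eq_right (le_of_not_ge hle), hcard, hwc]⟩

end PJT

theorem Formula.mem_vars {φ : Finset (Clause V)} {x : V} :
    x ∈ Formula.vars φ ↔ ∃ c ∈ φ, x ∈ c.vars :=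
  Finset.mem_sup

namespace IsPJT

variable {φ : Finset (Clause V)} {t : PJT V}

theorem clauses_nodup (h : IsPJT φ t) : t.clauses.Nodup :=
  h.clauses_eq ▸ φ.nodup

theorem countP_labels_le_one (h : IsPJT φ t) (x : V) : t.labels.countP (x ∈ ·) ≤ 1 :=
  Multiset.countP_mem_le_one_of_sum_card_eq
    (by rw [← PJT.P_eq_sup, h.cover, h.disjoint_labels]) x

theorem mem_of_subAt_leaf (h : IsPJT φ t) {p : List ℕ} {c : Clause V}
    (hp : t.subAt p = some (.leaf c)) : c ∈ φ := by
  have := PJT.mem_of_subAt_of_mem_own PJT.isSubtreeSum_clauses hp (PJT.mem_ownClauses.2 rfl)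
  rwa [h.clauses_eq] at this

theorem exists_subAt_leaf (h : IsPJT φ t) {c : Clause V} (hc : c ∈ φ) :
    ∃ p, t.subAt p = some (.leaf c) :=
  PJT.exists_subAt_leaf_of_mem_clauses (h.clauses_eq ▸ hc)

theorem eq_of_mem_ownLabels (h : IsPJT φ t) {p₁ p₂ : List ℕ} {s₁ s₂ : PJT V}
    {A₁ A₂ : Finset V} {x : V} (h₁ : t.subAt p₁ = some s₁) (h₂ : t.subAt p₂ = some s₂)
    (hA₁ : A₁ ∈ s₁.ownLabels) (hx₁ : x ∈ A₁) (hA₂ : A₂ ∈ s₂.ownLabels) (hx₂ : x ∈ A₂) :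
    p₁ = p₂ :=
  PJT.eq_of_subAt_of_countP_le_one PJT.isSubtreeSum_labels (h.countP_labels_le_one x) h₁ h₂
    hA₁ hx₁ hA₂ hx₂

theorem exists_ownLabels_of_mem_bag (h : IsPJT φ t) {p : List ℕ} {s : PJT V} {x : V}
    (hs : t.subAt p = some s) (hx : x ∈ s.bag) :
    ∃ q sq, t.subAt q = some sq ∧ ∃ A ∈ sq.ownLabels, x ∈ A := by
  suffices ∃ A ∈ t.labels, x ∈ A by
    obtain ⟨A, hA, hxA⟩ := this
    obtain ⟨q, sq, hq, hAq⟩ := PJT.exists_subAt_of_mem PJT.isSubtreeSum_labels hA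
    exact ⟨q, sq, hq, A, hAq, hxA⟩
  rcases PJT.mem_bag_iff.1 hx with hv | ⟨A, hA, hxA⟩
  · obtain ⟨ℓ, c, hℓ, hxc⟩ := PJT.exists_subAt_leaf_of_mem_varsOf hv
    have hc : c ∈ φ := h.mem_of_subAt_leaf (by rw [PJT.subAt_append, hs]; exact hℓ)
    rw [← PJT.mem_P_iff, h.cover]
    exact Formula.mem_vars.2 ⟨c, hc, hxc⟩
  · exact ⟨A, PJT.mem_of_subAt_of_mem_own PJT.isSubtreeSum_labels hs hA, hxA⟩

section Projection

variable {q : List ℕ} {sq : PJT V} {A : Finset V} {x : V}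

theorem prefix_of_subAt_leaf (h : IsPJT φ t) (hq : t.subAt q = some sq)
    (hA : A ∈ sq.ownLabels) (hxA : x ∈ A) {ℓ : List ℕ} {c : Clause V}
    (hℓ : t.subAt ℓ = some (.leaf c)) (hxc : x ∈ c.vars) : q <+: ℓ := by
  cases sq with
  | leaf _ => simp [PJT.ownLabels] at hA
  | node lbl cs =>
    rw [PJT.ownLabels, Multiset.mem_singleton] at hA
    subst hA
    have hc := h.descend A cs (PJT.subtree_of_subAt hq) c (h.mem_of_subAt_leaf hℓ) x hxA hxc
    obtain ⟨ℓ', hℓ'⟩ := PJT.exists_subAt_leaf_of_mem_clauses hc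
    have : t.subAt (q ++ ℓ') = some (.leaf c) := by rw [PJT.subAt_append, hq]; exact hℓ'
    exact PJT.eq_of_subAt_leaf h.clauses_nodup hℓ this ▸ List.prefix_append q ℓ'

theorem prefix_of_mem_bag (h : IsPJT φ t) (hq : t.subAt q = some sq)
    (hA : A ∈ sq.ownLabels) (hxA : x ∈ A) {p : List ℕ} {s : PJT V}
    (hp : t.subAt p = some s) (hx : x ∈ s.bag) : q <+: p := by
  rcases PJT.mem_bag_iff.1 hx with hv | ⟨B, hB, hxB⟩
  · obtain ⟨ℓ, c, hℓ, hxc⟩ := PJT.exists_subAt_leaf_of_mem_varsOf hv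
    have hleaf : ∀ {ℓ c}, s.subAt ℓ = some (.leaf c) → t.subAt (p ++ ℓ) = some (.leaf c) :=
      fun hℓ => by rw [PJT.subAt_append, hp]; exact hℓ
    -- an `x`-clause below `p` lies below `q` too, so `p` and `q` are comparable
    rcases List.prefix_or_prefix_of_prefix (h.prefix_of_subAt_leaf hq hA hxA (hleaf hℓ) hxc)
      (List.prefix_append p ℓ) with hqp | ⟨d, rfl⟩
    · exact hqp
    have hsd : s.subAt d = some sq := by rw [PJT.subAt_append, hp] at hq; exact hq
    refine absurd (PJT.mem_varsOf_subAt_of_forall_prefix hv hsd fun ℓ c hℓ hxc => ?_)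
      (PJT.notMem_varsOf_of_mem_ownLabels hA hxA)
    exact (List.prefix_append_right_inj p).1 (h.prefix_of_subAt_leaf hq hA hxA (hleaf hℓ) hxc)
  · exact (h.eq_of_mem_ownLabels hq hp hA hxA hB hxB).symm ▸ List.prefix_refl q

theorem mem_bag_of_prefix (h : IsPJT φ t) (hq : t.subAt q = some sq)
    (hA : A ∈ sq.ownLabels) (hxA : x ∈ A) {p m : List ℕ} {s : PJT V}
    (hp : t.subAt p = some s) (hx : x ∈ s.bag) (hqm : q <+: m) (hmp : m <+: p) :
    ∃ sm, t.subAt m = some sm ∧ x ∈ sm.bag := by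
  obtain ⟨d, rfl⟩ := hmp
  obtain ⟨sm, hsm, hs⟩ := Option.bind_eq_some_iff.1 (PJT.subAt_append t m d ▸ hp)
  refine ⟨sm, hsm, ?_⟩
  by_cases hlab : ∃ B ∈ sm.labels, x ∈ B
  · -- `x` is projected inside `sm`, and the only node projecting `x` is `q`
    obtain ⟨B, hB, hxB⟩ := hlab
    obtain ⟨n, sn, hn, hBn⟩ := PJT.exists_subAt_of_mem PJT.isSubtreeSum_labels hB
    have hmn : t.subAt (m ++ n) = some sn := by rw [PJT.subAt_append, hsm]; exact hn
    have hmq : m <+: q := h.eq_of_mem_ownLabels hmn hq hBn hxB hA hxA ▸ List.prefix_append m n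
    obtain rfl : m = q := hmq.eq_of_length (le_antisymm hmq.length_le hqm.length_le)
    obtain rfl : sm = sq := Option.some_inj.1 (hsm.symm.trans hq)
    exact PJT.mem_bag_iff.2 (Or.inr ⟨A, hA, hxA⟩)
  · push Not at hlab
    refine PJT.mem_bag_iff.2 (Or.inl (PJT.mem_varsOf_of_subAt hs ?_ hlab))
    rcases PJT.mem_bag_iff.1 hx with hv | ⟨B, hB, hxB⟩
    · exact hv
    · exact absurd hxB (hlab B (PJT.mem_of_subAt_of_mem_own PJT.isSubtreeSum_labels hs hB))

end Projection

end IsPJT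

/-- A project-join tree of width `w` yields a tree decomposition of the Gaifman
graph of `φ` of treewidth `w - 1`, with bags `χ(n) = vars(n)` at leaves and
`χ(n) = vars(n) ∪ π(n)` at internal nodes: (i) every variable of `φ` is in some
bag; (ii) both endpoints of every Gaifman edge (two variables sharing a clause)
lie in a common bag; (iii) for each variable, the nodes whose bags contain it
form a connected subtree; (iv) every bag has at most `w` elements and some bag
has exactly `w` elements. -/
theorem pjt_to_tree_decomposition {V : Type*} [DecidableEq V]
    (φ : Finset (Clause V)) (t : PJT V) (h : IsPJT φ t) :
    -- (i) vertex coverage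
    (∀ x ∈ Formula.vars φ, ∃ p b, t.bagAt p = some b ∧ x ∈ b) ∧
    -- (ii) edge coverage of the Gaifman graph
    (∀ x y : V, x ≠ y → (∃ c ∈ φ, x ∈ c.vars ∧ y ∈ c.vars) →
      ∃ p b, t.bagAt p = some b ∧ x ∈ b ∧ y ∈ b) ∧
    -- (iii) running intersection: the positions containing a variable form a
    -- connected subtree (closed under taking ancestors down to a common top)
    (∀ x : V, (∃ p b, t.bagAt p = some b ∧ x ∈ b) →
      ∃ top : List ℕ, ∀ p b, t.bagAt p = some b → x ∈ b →
        top <+: p ∧ ∀ m, top <+: m → m <+: p →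
          ∃ b', t.bagAt m = some b' ∧ x ∈ b') ∧
    -- (iv) the treewidth is width(T) - 1: max bag size equals width(T)
    (∀ p b, t.bagAt p = some b → b.card ≤ t.width) ∧
    (∃ p b, t.bagAt p = some b ∧ b.card = t.width) := by
  refine ⟨fun x hx => ?_, fun x y _ ⟨c, hc, hxc, hyc⟩ => ?_, fun x ⟨p, b, hb, hxb⟩ => ?_,
    fun p b hb => ?_, ?_⟩
  · obtain ⟨c, hc, hxc⟩ := Formula.mem_vars.1 hx
    obtain ⟨p, hp⟩ := h.exists_subAt_leaf hc
    exact ⟨p, c.vars, PJT.bagAt_of_subAt hp, hxc⟩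
  · obtain ⟨p, hp⟩ := h.exists_subAt_leaf hc
    exact ⟨p, c.vars, PJT.bagAt_of_subAt hp, hxc, hyc⟩
  · obtain ⟨s, hs, rfl⟩ := Option.map_eq_some_iff.1 hb
    obtain ⟨q, sq, hq, A, hA, hxA⟩ := h.exists_ownLabels_of_mem_bag hs hxb
    refine ⟨q, fun p b hb hxb => ?_⟩
    obtain ⟨s, hs, rfl⟩ := Option.map_eq_some_iff.1 hb
    refine ⟨h.prefix_of_mem_bag hq hA hxA hs hxb, fun m hqm hmp => ?_⟩
    obtain ⟨sm, hsm, hxm⟩ := h.mem_bag_of_prefix hq hA hxA hs hxb hqm hmp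
    exact ⟨sm.bag, PJT.bagAt_of_subAt hsm, hxm⟩
  · obtain ⟨s, hs, rfl⟩ := Option.map_eq_some_iff.1 hb
    exact PJT.card_bag_le_width_of_subAt hs
  · obtain ⟨p, s, hs, hcard⟩ := PJT.exists_subAt_card_bag_eq_width t
    exact ⟨p, s.bag, PJT.bagAt_of_subAt hs, hcard⟩
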